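/- For j = 1, 2, ..., k, let A_j be an n_j×n_j nonnegative real matrix (all entries ≥ 0) with eigenvalues λ_{1j}, λ_{2j}, ..., λ_{n_j j} counted with multiplicity, and suppose for each j the vector u_j is a nonnegative (Perron–Frobenius) unit eigenvector of A_j corresponding to the eigenvalue λ_{1j}. Then for any nonnegative real constants ρ_{pq} (1 ≤ p, q ≤ k), the block matrix B whose (p,p) diagonal block is A_p + ρ_{pp} u_p u_pᵀ and whose (p,q) off-diagonal block (p ≠ q) is ρ_{pq} u_p u_qᵀ is a nonnegative matrix, and its eigenvalues are λ_{21}, ..., λ_{n₁1}, λ_{22}, ..., λ_{n₂2}, ..., λ_{2k}, ..., λ_{n_k k}, γ₁, ..., γ_k (counted with multiplicity), where γ₁, ..., γ_k are the eigenvalues of the nonnegative k×k matrix B̂ whose (p,p) entry is λ_{1p} + ρ_{pp} and whose (p,q) entry (p ≠ q) is ρ_{pq}. -/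

import Mathlib

/-!
Let `U` be the block-diagonal matrix whose `j`-th block is the column `u_j`. Then `Uᵀ U = 1`,
`diag(A_j) U = U diag(λ_{1j})`, `B = diag(A_j) + U ρ Uᵀ` and `B̂ = diag(λ_{1j}) + ρ`.
Over the fraction field of `ℝ[X]`, with `M = X - diag(A_j)` and `L = X - diag(λ_{1j})`, the
Weinstein–Aronszajn identity gives `det (M - U ρ Uᵀ) = det M · det (1 - ρ Uᵀ M⁻¹ U)`, and
`Uᵀ M⁻¹ U L = 1`. Hence `χ_B · ∏ (X - λ_{1j}) = ∏ χ_{A_j} · χ_{B̂}`, and cancelling the roots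
`λ_{1j}` on both sides leaves the claimed spectrum.
-/

open Matrix Polynomial

theorem Polynomial.roots_add_roots_of_mul_eq {R : Type*} [CommRing R] [IsDomain R]
    {p q r s : R[X]} (h : p * q = r * s) (hp : p ≠ 0) (hq : q ≠ 0) :
    p.roots + q.roots = r.roots + s.roots := by
  rw [← roots_mul (mul_ne_zero hp hq), h, roots_mul (h ▸ mul_ne_zero hp hq)]

theorem Matrix.nonneg_of_mulVec_eq_smul {n R : Type*} [Fintype n] [Semiring R] [LinearOrder R]
    [IsStrictOrderedRing R] {A : Matrix n n R} {u : n → R} {c : R} (hA : ∀ i j, 0 ≤ A i j)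
    (hu : ∀ i, 0 ≤ u i) (hu0 : u ≠ 0) (h : A *ᵥ u = c • u) : 0 ≤ c := by
  obtain ⟨i, hi⟩ := Function.ne_iff.mp hu0
  have hAu : 0 ≤ (A *ᵥ u) i := Finset.sum_nonneg fun j _ => mul_nonneg (hA i j) (hu j)
  rw [h, Pi.smul_apply, smul_eq_mul] at hAu
  exact nonneg_of_mul_nonneg_left hAu ((hu i).lt_of_ne (Ne.symm hi))

namespace Matrix

section BlockDiagonal

variable {ι R : Type*} [Fintype ι] [DecidableEq ι] {m : ι → Type*} [∀ i, Fintype (m i)]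
  [∀ i, DecidableEq (m i)] [CommRing R]

theorem det_blockDiagonal' (M : ∀ i, Matrix (m i) (m i) R) :
    (blockDiagonal' M).det = ∏ i, (M i).det := by
  let _ : LinearOrder ι := LinearOrder.lift' _ (Fintype.equivFin ι).injective
  convert (blockTriangular_blockDiagonal' M).det_fintype using 1
  refine Finset.prod_congr rfl fun i _ => ?_
  rw [← det_submatrix_equiv_self (Equiv.sigmaSubtype i).symm]
  congr 1
  ext a b
  simp [toSquareBlock_def, Equiv.sigmaSubtype, blockDiagonal'_apply_eq]

theorem charmatrix_blockDiagonal' (M : ∀ i, Matrix (m i) (m i) R) :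
    charmatrix (blockDiagonal' M) = blockDiagonal' fun i => charmatrix (M i) := by
  simp only [charmatrix, scalar_apply, RingHom.mapMatrix_apply,
    blockDiagonal'_map _ _ C_0]
  rw [← blockDiagonal'_diagonal fun _ _ => X, ← blockDiagonal'_sub]
  rfl

theorem charpoly_blockDiagonal' (M : ∀ i, Matrix (m i) (m i) R) :
    (blockDiagonal' M).charpoly = ∏ i, (M i).charpoly := by
  rw [charpoly, charmatrix_blockDiagonal', det_blockDiagonal']
  rfl

end BlockDiagonal

section RankUpdate

variable {n k R : Type*} [Fintype n] [DecidableEq n] [Fintype k] [DecidableEq k] [CommRing R]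

theorem charmatrix_add (A B : Matrix n n R) :
    (A + B).charmatrix = A.charmatrix - B.map C := by
  rw [charmatrix, charmatrix, map_add, sub_add_eq_sub_sub]
  rfl

theorem det_add_mul_mul_transpose {M : Matrix n n R} {U : Matrix n k R} {L : Matrix k k R}
    (hM : IsUnit M.det) (hMU : M * U = U * L) (hU : Uᵀ * U = 1) (ρ : Matrix k k R) :
    (M + U * ρ * Uᵀ).det * L.det = M.det * (L + ρ).det := by
  have hL : ρ * Uᵀ * M⁻¹ * U * L = ρ := by
    rw [Matrix.mul_assoc _ U L, ← hMU, ← Matrix.mul_assoc _ M U, Matrix.mul_assoc _ M⁻¹ M,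
      nonsing_inv_mul _ hM, Matrix.mul_one, Matrix.mul_assoc, hU, Matrix.mul_one]
  rw [Matrix.mul_assoc U, det_add_mul _ _ hM, mul_assoc, ← det_mul, Matrix.add_mul,
    Matrix.one_mul, hL]

theorem charpoly_add_mul_mul_transpose [IsDomain R] {M : Matrix n n R} {U : Matrix n k R}
    {L : Matrix k k R} (hMU : M * U = U * L) (hU : Uᵀ * U = 1) (ρ : Matrix k k R) :
    (M + U * ρ * Uᵀ).charpoly * L.charpoly = M.charpoly * (L + ρ).charpoly := by
  have hMUc : M.charmatrix * U.map C = U.map C * L.charmatrix := by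
    simp only [charmatrix, scalar_apply, RingHom.mapMatrix_apply, Matrix.sub_mul, Matrix.mul_sub,
      ← smul_eq_diagonal_mul, ← smul_eq_mul_diagonal, ← Matrix.map_mul, hMU]
  have hUc : (U.map C)ᵀ * U.map C = 1 := by
    rw [← transpose_map, ← Matrix.map_mul, hU, Matrix.map_one _ C_0 C_1]
  rw [charpoly, charpoly, charpoly, charpoly, charmatrix_add, charmatrix_add, Matrix.map_mul,
    Matrix.map_mul, transpose_map, sub_eq_add_neg, sub_eq_add_neg, ← Matrix.neg_mul,
    ← Matrix.mul_neg]
  let φ : R[X] →+* FractionRing R[X] := algebraMap _ _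
  have hφ : Function.Injective φ := IsFractionRing.injective _ _
  have hMunit : IsUnit (φ.mapMatrix M.charmatrix).det := by
    rw [← RingHom.map_det, isUnit_iff_ne_zero, map_ne_zero_iff _ hφ]
    exact M.charpoly_monic.ne_zero
  apply hφ
  simp only [map_mul, RingHom.map_det, map_add]
  simp only [RingHom.mapMatrix_apply, Matrix.map_mul, transpose_map] at hMunit ⊢
  refine det_add_mul_mul_transpose hMunit ?_ ?_ _
  · rw [← Matrix.map_mul, hMUc, Matrix.map_mul]
  · rw [← transpose_map, ← Matrix.map_mul, hUc, Matrix.map_one _ φ.map_zero φ.map_one]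

end RankUpdate

section BlockColumns

variable {ι R : Type*} [DecidableEq ι] {m : ι → Type*} [CommSemiring R]

def blockDiagonalCol (u : ∀ i, m i → R) : Matrix (Σ i, m i) ι R :=
  of fun x j => if x.1 = j then u x.1 x.2 else 0

variable [Fintype ι]

theorem transpose_blockDiagonalCol_mul_self [∀ i, Fintype (m i)] (u : ∀ i, m i → R) :
    (blockDiagonalCol u)ᵀ * blockDiagonalCol u = diagonal fun i => u i ⬝ᵥ u i := by
  ext i j
  rw [mul_apply, ← Finset.univ_sigma_univ, Finset.sum_sigma]
  by_cases h : i = j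
  · subst h
    simp [blockDiagonalCol, dotProduct]
  · simp [blockDiagonalCol, h, Ne.symm h]

theorem blockDiagonal'_mul_blockDiagonalCol [∀ i, Fintype (m i)] [∀ i, DecidableEq (m i)]
    (M : ∀ i, Matrix (m i) (m i) R) (u : ∀ i, m i → R) :
    blockDiagonal' M * blockDiagonalCol u = blockDiagonalCol fun i => M i *ᵥ u i := by
  ext ⟨i, a⟩ j
  rw [mul_apply, ← Finset.univ_sigma_univ, Finset.sum_sigma]
  by_cases h : i = j
  · subst h
    simp [blockDiagonalCol, blockDiagonal'_apply, mulVec, dotProduct]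
  · simp [blockDiagonalCol, blockDiagonal'_apply, h]

theorem blockDiagonalCol_smul (c : ι → R) (u : ∀ i, m i → R) :
    blockDiagonalCol (fun i => c i • u i) = blockDiagonalCol u * diagonal c := by
  ext ⟨i, a⟩ j
  by_cases h : i = j
  · subst h
    simp [blockDiagonalCol, mul_comm]
  · simp [blockDiagonalCol, h]

theorem blockDiagonalCol_mul_mul_transpose_apply (u : ∀ i, m i → R) (ρ : Matrix ι ι R)
    (x y : Σ i, m i) :
    (blockDiagonalCol u * ρ * (blockDiagonalCol u)ᵀ) x y = ρ x.1 y.1 * u x.1 x.2 * u y.1 y.2 := by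
  simp only [blockDiagonalCol, mul_apply, of_apply, transpose_apply, ite_mul, mul_ite, zero_mul,
    mul_zero, Finset.sum_ite_eq, Finset.mem_univ, if_true]
  ring

end BlockColumns

theorem charpoly_blockDiagonal'_add_blockDiagonalCol_mul_mul_transpose {ι R : Type*} [Fintype ι]
    [DecidableEq ι] {m : ι → Type*} [∀ i, Fintype (m i)] [∀ i, DecidableEq (m i)] [CommRing R]
    [IsDomain R] {A : ∀ i, Matrix (m i) (m i) R} {u : ∀ i, m i → R} {c : ι → R}
    (hAu : ∀ i, A i *ᵥ u i = c i • u i) (hu : ∀ i, u i ⬝ᵥ u i = 1) (ρ : Matrix ι ι R) :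
    (blockDiagonal' A + blockDiagonalCol u * ρ * (blockDiagonalCol u)ᵀ).charpoly
        * ∏ i, (X - C (c i))
      = (∏ i, (A i).charpoly) * (diagonal c + ρ).charpoly := by
  have hMU : blockDiagonal' A * blockDiagonalCol u = blockDiagonalCol u * diagonal c := by
    rw [blockDiagonal'_mul_blockDiagonalCol, ← blockDiagonalCol_smul]
    simp_rw [hAu]
  have hUU : (blockDiagonalCol u)ᵀ * blockDiagonalCol u = 1 := by
    rw [transpose_blockDiagonalCol_mul_self, ← diagonal_one]
    simp_rw [hu]
  rw [← charpoly_blockDiagonal', ← charpoly_diagonal]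
  exact charpoly_add_mul_mul_transpose hMU hUU ρ

theorem roots_charpoly_map_add_eq_of_charpoly_mul_eq {ι n R K : Type*} [Fintype ι]
    [DecidableEq ι] {m : ι → Type*} [∀ i, Fintype (m i)] [∀ i, DecidableEq (m i)] [Fintype n]
    [DecidableEq n] [CommRing R] [CommRing K] [IsDomain K] (f : R →+* K) {M : Matrix n n R}
    {N : Matrix ι ι R} {A : ∀ i, Matrix (m i) (m i) R} {c : ι → R}
    (h : M.charpoly * ∏ i, (X - C (c i)) = (∏ i, (A i).charpoly) * N.charpoly) :
    (M.map f).charpoly.roots + Finset.univ.val.map (fun i => f (c i))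
      = (Finset.univ.val.bind fun i => ((A i).map f).charpoly.roots)
        + (N.map f).charpoly.roots := by
  have hf := congrArg (Polynomial.map f) h
  simp only [Polynomial.map_mul, Polynomial.map_prod, ← charpoly_map, Polynomial.map_sub, map_X,
    map_C] at hf
  have hroots := roots_add_roots_of_mul_eq hf (charpoly_monic _).ne_zero
    (Finset.prod_ne_zero_iff.mpr fun i _ => X_sub_C_ne_zero _)
  rw [roots_prod _ _ (Finset.prod_ne_zero_iff.mpr fun i _ => X_sub_C_ne_zero _),
    roots_prod _ _ (Finset.prod_ne_zero_iff.mpr fun i _ => (charpoly_monic _).ne_zero)] at hroots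
  simpa only [roots_X_sub_C, Multiset.bind_singleton] using hroots

end Matrix

/-- Nonnegative version of the main theorem: if the `A_j` are nonnegative with
nonnegative Perron–Frobenius unit eigenvectors `u_j` and all `ρ_{pq} ≥ 0`, then `B`
is nonnegative, `B̂` is nonnegative, and the spectrum of `B` is that of `B̂` together
with the non-Perron eigenvalues of the blocks. -/
theorem stmt_7 (k : ℕ) (n : Fin k → ℕ)
    (A : ∀ j, Matrix (Fin (n j + 1)) (Fin (n j + 1)) ℝ)
    (hAnn : ∀ j, ∀ s t, 0 ≤ A j s t)
    (lam1 : Fin k → ℝ)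
    (μ : ∀ j, Fin (n j) → ℂ)
    (hspec : ∀ j, ((A j).map Complex.ofReal).charpoly.roots
        = (lam1 j : ℂ) ::ₘ Finset.univ.val.map (μ j))
    (u : ∀ j, Fin (n j + 1) → ℝ)
    (hunn : ∀ j i, 0 ≤ u j i)
    (heig : ∀ j, (A j).mulVec (u j) = lam1 j • u j)
    (hnorm : ∀ j, ∑ i, u j i ^ 2 = 1)
    (ρ : Fin k → Fin k → ℝ)
    (hρnn : ∀ p q, 0 ≤ ρ p q)
    (B : Matrix ((j : Fin k) × Fin (n j + 1)) ((j : Fin k) × Fin (n j + 1)) ℝ)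
    (hB : ∀ x y : (j : Fin k) × Fin (n j + 1), B x y =
      (if h : x.1 = y.1 then A x.1 x.2 (Fin.cast (by rw [h]) y.2) else 0)
        + ρ x.1 y.1 * u x.1 x.2 * u y.1 y.2)
    (Bhat : Matrix (Fin k) (Fin k) ℝ)
    (hBhat : ∀ p q : Fin k, Bhat p q = (if p = q then lam1 p else 0) + ρ p q) :
    (∀ x y, 0 ≤ B x y) ∧ (∀ p q, 0 ≤ Bhat p q) ∧
    (B.map Complex.ofReal).charpoly.roots
      = (Bhat.map Complex.ofReal).charpoly.roots
        + Finset.univ.val.bind fun j : Fin k => Finset.univ.val.map (μ j) := by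
  have hunit : ∀ j, u j ⬝ᵥ u j = 1 := fun j => by simpa [dotProduct, sq] using hnorm j
  have hlam : ∀ j, 0 ≤ lam1 j := fun j =>
    nonneg_of_mulVec_eq_smul (hAnn j) (hunn j) (fun h0 => by simpa [h0] using hunit j) (heig j)
  refine ⟨fun x y => ?_, fun p q => ?_, ?_⟩
  · rw [hB]
    refine add_nonneg ?_ (mul_nonneg (mul_nonneg (hρnn _ _) (hunn _ _)) (hunn _ _))
    split_ifs
    exacts [hAnn _ _ _, le_rfl]
  · rw [hBhat]
    refine add_nonneg ?_ (hρnn p q)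
    split_ifs
    exacts [hlam p, le_rfl]
  have hBdecomp : B = blockDiagonal' A + blockDiagonalCol u * of ρ * (blockDiagonalCol u)ᵀ := by
    ext ⟨i, a⟩ ⟨j, b⟩
    rw [hB, Matrix.add_apply, blockDiagonalCol_mul_mul_transpose_apply, blockDiagonal'_apply]
    congr 1
    by_cases h : i = j
    · subst h
      simp
    · simp [h]
  have hBhat' : Bhat = diagonal lam1 + of ρ := by
    ext p q
    rw [hBhat, Matrix.add_apply, diagonal_apply, of_apply]
  have hpoly := charpoly_blockDiagonal'_add_blockDiagonalCol_mul_mul_transpose heig hunit (of ρ)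
  rw [← hBdecomp, ← hBhat'] at hpoly
  have hroots := roots_charpoly_map_add_eq_of_charpoly_mul_eq Complex.ofRealHom hpoly
  have hcoe : ⇑Complex.ofRealHom = Complex.ofReal := rfl
  simp only [hcoe, hspec, Multiset.bind_cons] at hroots
  apply add_right_cancel (b := Finset.univ.val.map fun j => (lam1 j : ℂ))
  rw [hroots]
  abel
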